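/- arXiv:2507.13214 — 2 statements merged into one kernel-verified Lean document; each statement's English description precedes it below -/
import Mathlib

section
/- For every permutation w ∈ S_n and reduced pipe dream P ∈ PD(w), deleting from each row m the rightmost box of pipe n (the set B_m(P) of boxes in row m containing part of pipe n) and left-shifting yields a reduced pipe dream P̂ for the permutation ŵ ∈ S_{n-1} obtained from w by deleting the value n; moreover, the inversions tableau Θ(P̂) equals Θ(P) with column n deleted. -/
open Classical

noncomputable section

/-- 1-based value of a permutation of `Fin n` at a 1-based position `j`. -/
def permVal {n : ℕ} (w : Equiv.Perm (Fin n)) (j : ℕ) : ℕ :=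
  if h : 1 ≤ j ∧ j ≤ n then (w ⟨j - 1, by omega⟩ : ℕ) + 1 else 0

/-- `(i,j)` is an inversion of `w`: `1 ≤ i < j ≤ n` and the (1-based) position of the
value `j` in the one-line notation of `w` precedes that of `i`. -/
def IsInv {n : ℕ} (w : Equiv.Perm (Fin n)) (i j : ℕ) : Prop :=
  1 ≤ i ∧ i < j ∧ j ≤ n ∧ permVal w.symm j < permVal w.symm i

/-- Lehmer form entry at box `(i,j)`: the number of `k ∈ [1, T(i,j)-1]` that do not
appear below box `(i,j)` in column `j`. -/
def lehmer (T : ℕ → ℕ → ℕ) (i j : ℕ) : ℕ :=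
  ((Finset.Ico 1 (T i j)).filter fun k => ∀ i', 1 ≤ i' → i' < i → T i' j ≠ k).card

/-- Incrementing box `(i,j)` of `T` yields `T'`:  with `a = T(i,j)` and `b` the smallest
integer greater than `a` not appearing below `(i,j)` in column `j`, either a pure
increment (if `b` is absent from column `j`) or a trade increment (swap `a` and `b`). -/
def IncrementAt (T T' : ℕ → ℕ → ℕ) (i j : ℕ) : Prop :=
  ∃ b, T i j < b ∧
    (∀ k, T i j < k → k < b → ∃ i', 1 ≤ i' ∧ i' < i ∧ T i' j = k) ∧
    (∀ i', 1 ≤ i' → i' < i → T i' j ≠ b) ∧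
    (((∀ i', 1 ≤ i' → T i' j ≠ b) ∧
        T' = fun a c => if a = i ∧ c = j then b else T a c) ∨
      (∃ i'', i < i'' ∧ T i'' j = b ∧
        T' = fun a c =>
          if a = i ∧ c = j then b else if a = i'' ∧ c = j then T i j else T a c))

/-- `IncBy M T T'`: `T'` is obtained from `T` by incrementing each box of the
multiset `M` (with multiplicity). -/
inductive IncBy : Multiset (ℕ × ℕ) → (ℕ → ℕ → ℕ) → (ℕ → ℕ → ℕ) → Prop
  | nil (T : ℕ → ℕ → ℕ) : IncBy 0 T T
  | cons {M : Multiset (ℕ × ℕ)} {T T' T'' : ℕ → ℕ → ℕ} {i j : ℕ} :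
      IncrementAt T T' i j → IncBy M T' T'' → IncBy ((i, j) ::ₘ M) T T''

/-- Column-injective tableau for `w`: a box has a nonzero entry iff it is an inversion
of `w`, and the nonzero entries in each column are distinct. -/
def ColInj {n : ℕ} (w : Equiv.Perm (Fin n)) (T : ℕ → ℕ → ℕ) : Prop :=
  (∀ i j, T i j ≠ 0 ↔ IsInv w i j) ∧
  ∀ i i' j, 1 ≤ i → i < i' → i' < j → T i j ≠ 0 → T i' j ≠ 0 → T i j ≠ T i' j

/-- The Λ-shape `Λ(i,j,k)` is balanced in `T`. -/
def LBal (T : ℕ → ℕ → ℕ) (i j k : ℕ) : Prop :=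
  min (T i j) (T j k) ≤ T i k ∧ T i k ≤ max (T i j) (T j k)

/-- Every Λ-shape of `Δ_{n-1}` is balanced in `T`. -/
def BalancedTab (n : ℕ) (T : ℕ → ℕ → ℕ) : Prop :=
  ∀ i j k, 1 ≤ i → i < j → j < k → k ≤ n → LBal T i j k

/-- Inversions tableau for `w`: balanced column-injective tableau whose entries in
row `i` are at most `i`. -/
def InvTab {n : ℕ} (w : Equiv.Perm (Fin n)) (T : ℕ → ℕ → ℕ) : Prop :=
  ColInj w T ∧ BalancedTab n T ∧ ∀ i j, T i j ≤ i

/-- The multiset of entries of `T` on `hook(i,k)`. -/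
def hookEntries (T : ℕ → ℕ → ℕ) (i k : ℕ) : Multiset ℕ :=
  (T i k ::ₘ (Finset.Ioo i k).val.map fun r => T r k) +
    (Finset.Ioo i k).val.map fun c => T i c

/-- The median ((k-i)-th smallest of the `2(k-i)-1` entries) of the hook of `(i,k)`. -/
def hookMedian (T : ℕ → ℕ → ℕ) (i k : ℕ) : ℕ :=
  ((hookEntries T i k).sort (· ≤ ·)).getD (k - i - 1) 0

/-! ## Pipe dreams

A pipe dream in the staircase `Δ_n` is encoded by `P : ℕ → ℕ → Bool`, where
`P i j = true` means box `(i,j)` (row `i` from the top, column `j` from the left,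
with `1 ≤ i, j` and `i + j ≤ n`) is a cross tile, and `false` means a bump tile;
boxes on the southeast boundary (`i + j = n + 1`) are elbow tiles. -/

/-- `labels n P i j` is the pair (label of the north edge, label of the east edge) of
the pipes passing through box `(i,j)`:  pipes enter at row `k` on the west side with
label `k` and propagate through cross, bump and elbow tiles. -/
def labels (n : ℕ) (P : ℕ → ℕ → Bool) (i j : ℕ) : ℕ × ℕ :=
  let west := if _h1 : j ≤ 1 then i else (labels n P i (j - 1)).2
  if _h : i + j ≤ n then
    if P i j then ((labels n P (i + 1) j).1, west)
    else (west, (labels n P (i + 1) j).1)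
  else (west, west)
termination_by (n + 1 - i) + j
decreasing_by all_goals omega

def northLabel (n : ℕ) (P : ℕ → ℕ → Bool) (i j : ℕ) : ℕ := (labels n P i j).1

def westLabel (n : ℕ) (P : ℕ → ℕ → Bool) (i j : ℕ) : ℕ :=
  if j ≤ 1 then i else (labels n P i (j - 1)).2

def southLabel (n : ℕ) (P : ℕ → ℕ → Bool) (i j : ℕ) : ℕ := (labels n P (i + 1) j).1

/-- Pipes `p` and `q` cross at box `(i,j)` of `P`. -/
def CrossAt (n : ℕ) (P : ℕ → ℕ → Bool) (i j p q : ℕ) : Prop :=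
  1 ≤ i ∧ 1 ≤ j ∧ i + j ≤ n ∧ P i j = true ∧
    ((westLabel n P i j = p ∧ southLabel n P i j = q) ∨
      (westLabel n P i j = q ∧ southLabel n P i j = p))

/-- `P` is a pipe dream for `w`: crosses lie in the staircase, and reading the pipe
labels along the north side gives the one-line notation of `w`. -/
def IsPD {n : ℕ} (w : Equiv.Perm (Fin n)) (P : ℕ → ℕ → Bool) : Prop :=
  (∀ i j, P i j = true → 1 ≤ i ∧ 1 ≤ j ∧ i + j ≤ n) ∧
    ∀ j, 1 ≤ j → j ≤ n → northLabel n P 1 j = permVal w j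

/-- `P` is reduced: no two pipes cross more than once. -/
def Reduced (n : ℕ) (P : ℕ → ℕ → Bool) : Prop :=
  ∀ p q i j i' j', CrossAt n P i j p q → CrossAt n P i' j' p q → i = i' ∧ j = j'

/-- The set of reduced pipe dreams for `w`. -/
def RPD {n : ℕ} (w : Equiv.Perm (Fin n)) :=
  { P : ℕ → ℕ → Bool // IsPD w P ∧ Reduced n P }

/-- `R` is a rectangle (rows `a < b`, columns `c < d`) in which a chute move of `P`
can take place: `NW(R)=(a,c)` and `SW(R)=(b,c)` are bumps, `SE(R)=(b,d)` is a bump or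
elbow, and all other boxes of `R` are crosses. -/
def IsChuteRect (n : ℕ) (P : ℕ → ℕ → Bool) (a b c d : ℕ) : Prop :=
  1 ≤ a ∧ a < b ∧ 1 ≤ c ∧ c < d ∧ b + d ≤ n + 1 ∧
    P a c = false ∧ P b c = false ∧ P b d = false ∧
    ∀ i j, a ≤ i → i ≤ b → c ≤ j → j ≤ d →
      ¬(i = a ∧ j = c) → ¬(i = b ∧ j = c) → ¬(i = b ∧ j = d) → P i j = true

/-- The result of the chute move in the rectangle with corners `(a,c)`, `(b,d)`:
the bump at `SW=(b,c)` becomes a cross and the cross at `NE=(a,d)` becomes a bump. -/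
def chuteResult (P : ℕ → ℕ → Bool) (a b c d : ℕ) : ℕ → ℕ → Bool :=
  fun i j => if i = b ∧ j = c then true else if i = a ∧ j = d then false else P i j

/-- `P'` is obtained from `P` by a single chute move. -/
def ChuteStep (n : ℕ) (P P' : ℕ → ℕ → Bool) : Prop :=
  ∃ a b c d, IsChuteRect n P a b c d ∧ P' = chuteResult P a b c d

/-- The chute move order on `RPD w`: `P ≤ Q` iff `Q` is obtained from `P`
by a sequence of chute moves. -/
def chuteLE {n : ℕ} (w : Equiv.Perm (Fin n)) (P Q : RPD w) : Prop :=
  Relation.ReflTransGen (fun X Y : RPD w => ChuteStep n X.1 Y.1) P Q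

/-- `theta n P p q` is the index of the row in which pipes `p` and `q` cross in `P`
(`0` if they do not cross).  For `P ∈ PD(w)` reduced, `theta n P` is the inversions
tableau `Θ(P)`. -/
def theta (n : ℕ) (P : ℕ → ℕ → Bool) (p q : ℕ) : ℕ :=
  if h : ∃ rc : ℕ × ℕ, CrossAt n P rc.1 rc.2 p q then (Classical.choose h).1 else 0

/-- The Lehmer tableau `Φ(P) = Λ(Θ(P))` of a pipe dream. -/
def phi (n : ℕ) (P : ℕ → ℕ → Bool) (i j : ℕ) : ℕ := lehmer (theta n P) i j

/-- Cover relation of the chute move order. -/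
def chuteCovBy {n : ℕ} (w : Equiv.Perm (Fin n)) (P Q : RPD w) : Prop :=
  chuteLE w P Q ∧ P ≠ Q ∧ ∀ R, chuteLE w P R → chuteLE w R Q → R = P ∨ R = Q

/-- The interval `[P, Q]` in the chute move order. -/
def chuteIcc {n : ℕ} (w : Equiv.Perm (Fin n)) (P Q : RPD w) : Set (RPD w) :=
  { R | chuteLE w P R ∧ chuteLE w R Q }

/-- A chain in the chute move order. -/
def chuteChain {n : ℕ} (w : Equiv.Perm (Fin n)) (C : Set (RPD w)) : Prop :=
  ∀ x ∈ C, ∀ y ∈ C, chuteLE w x y ∨ chuteLE w y x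

/-- `[P,Q]` is a polygon: an interval of cardinality at least 4 that is the union of
two chains whose intersection is `{P, Q}`. -/
def IsPolygon {n : ℕ} (w : Equiv.Perm (Fin n)) (P Q : RPD w) : Prop :=
  chuteLE w P Q ∧ 4 ≤ (chuteIcc w P Q).ncard ∧
    ∃ C₁ C₂ : Set (RPD w), chuteChain w C₁ ∧ chuteChain w C₂ ∧
      C₁ ∪ C₂ = chuteIcc w P Q ∧ C₁ ∩ C₂ = {P, Q}

/-- `m` is the meet (greatest lower bound) of `P` and `Q` in the chute move order. -/
def IsMeetOf {n : ℕ} (w : Equiv.Perm (Fin n)) (m P Q : RPD w) : Prop :=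
  chuteLE w m P ∧ chuteLE w m Q ∧ ∀ r, chuteLE w r P → chuteLE w r Q → chuteLE w r m

/-- `s` is the join (least upper bound) of `P` and `Q` in the chute move order. -/
def IsJoinOf {n : ℕ} (w : Equiv.Perm (Fin n)) (s P Q : RPD w) : Prop :=
  chuteLE w P s ∧ chuteLE w Q s ∧ ∀ r, chuteLE w P r → chuteLE w Q r → chuteLE w s r

/-- Box `(i,j)` of `P` contains part of pipe `p` (the pipe enters the box from its
west or south edge). -/
def HasPipe (n : ℕ) (P : ℕ → ℕ → Bool) (i j p : ℕ) : Prop :=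
  westLabel n P i j = p ∨ (i + j ≤ n ∧ southLabel n P i j = p)

/-- The column of the rightmost box of row `m` containing part of pipe `n`. -/
def delCol (n : ℕ) (P : ℕ → ℕ → Bool) (m : ℕ) : ℕ :=
  Nat.findGreatest (fun j => 1 ≤ j ∧ m + j ≤ n + 1 ∧ HasPipe n P m j n) (n + 1)

/-- The pipe dream `P̂` obtained from `P` by deleting, in each row, the rightmost box
containing part of pipe `n`, and left-shifting the boxes to its right. -/
def hatPD (n : ℕ) (P : ℕ → ℕ → Bool) : ℕ → ℕ → Bool :=
  fun i j => if j < delCol n P i then P i j else P i (j + 1)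

/-! Follow pipe `n` upwards from its entry at the bottom of the staircase. Entering row `m` from
below at column `c`, it either goes straight through a cross at `(m, c)`, or turns east at a bump
there; in the second case reducedness forces it to turn north again at `(m, c + 1)`, for otherwise
it would cross the pipe coming up through `(m, c + 1)` both there and (as every pipe to its right
started to its left) somewhere further down. So `B_m(P)` is one cross or two adjacent bumps, and
deleting its rightmost box and closing the gap leaves every other box with the same tile and the
same incoming pipes. Hence all pipes other than `n`, their crossings, and their positions along the
top edge are unchanged. -/

section Labels

variable {n : ℕ} {P : ℕ → ℕ → Bool} {i j : ℕ}

theorem westLabel_one : westLabel n P i 1 = i := by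
  simp [westLabel]

theorem labels_eq :
    labels n P i j =
      if i + j ≤ n then
        if P i j then (southLabel n P i j, westLabel n P i j)
        else (westLabel n P i j, southLabel n P i j)
      else (westLabel n P i j, westLabel n P i j) := by
  rw [labels]
  simp only [dite_eq_ite]
  rfl

theorem northLabel_eq :
    northLabel n P i j =
      if i + j ≤ n ∧ P i j = true then southLabel n P i j else westLabel n P i j := by
  rw [northLabel, labels_eq]
  by_cases h : i + j ≤ n <;> by_cases hc : P i j <;> simp [h, hc]

theorem westLabel_succ (hj : 1 ≤ j) :
    westLabel n P i (j + 1) =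
      if i + j ≤ n ∧ P i j = false then southLabel n P i j else westLabel n P i j := by
  rw [westLabel, if_neg (by omega), Nat.add_sub_cancel, labels_eq]
  by_cases h : i + j ≤ n <;> by_cases hc : P i j <;> simp [h, hc]

theorem southLabel_eq_northLabel : southLabel n P i j = northLabel n P (i + 1) j := rfl

end Labels

/-- Pipe `n` enters row `m` from below through box `(m, pipeCol n P (m + 1))` and leaves it
upwards through box `(m, pipeCol n P m)`: it goes straight through a cross and turns east at a
bump (in a reduced pipe dream it then turns north in the next box, see `PipeTurnsNorth`). -/
def pipeCol (n : ℕ) (P : ℕ → ℕ → Bool) (m : ℕ) : ℕ :=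
  if n ≤ m then 1
  else if P m (pipeCol n P (m + 1)) then pipeCol n P (m + 1) else pipeCol n P (m + 1) + 1
termination_by n - m

section Trajectory

variable {n : ℕ} {P : ℕ → ℕ → Bool} {m j : ℕ}

theorem pipeCol_of_le (h : n ≤ m) : pipeCol n P m = 1 := by
  rw [pipeCol, if_pos h]

theorem pipeCol_of_cross (h : m < n) (hc : P m (pipeCol n P (m + 1)) = true) :
    pipeCol n P m = pipeCol n P (m + 1) := by
  rw [pipeCol, if_neg (by omega), if_pos hc]

theorem pipeCol_of_bump (h : m < n) (hc : P m (pipeCol n P (m + 1)) = false) :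
    pipeCol n P m = pipeCol n P (m + 1) + 1 := by
  rw [pipeCol, if_neg (by omega), if_neg (by simp [hc])]

theorem pipeCol_cases (h : m < n) :
    pipeCol n P m = pipeCol n P (m + 1) ∨ pipeCol n P m = pipeCol n P (m + 1) + 1 := by
  rcases Bool.eq_false_or_eq_true (P m (pipeCol n P (m + 1))) with hb | hb
  · exact .inl (pipeCol_of_cross h hb)
  · exact .inr (pipeCol_of_bump h hb)

theorem one_le_pipeCol : 1 ≤ pipeCol n P m := by
  induction m using pipeCol.induct n P with
  | case1 m h => rw [pipeCol_of_le h]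
  | case2 m h hc ih => rwa [pipeCol_of_cross (by omega) hc]
  | case3 m h hc _ => rw [pipeCol_of_bump (by omega) (by simpa using hc)]; omega

theorem add_pipeCol_le (hm : m ≤ n) : m + pipeCol n P m ≤ n + 1 := by
  induction m using pipeCol.induct n P with
  | case1 m h => rw [pipeCol_of_le h]; omega
  | case2 m h hc ih => rw [pipeCol_of_cross (by omega) hc]; have := ih (by omega); omega
  | case3 m h hc ih =>
    rw [pipeCol_of_bump (by omega) (by simpa using hc)]; have := ih (by omega); omega

def PipeTurnsNorth (n : ℕ) (P : ℕ → ℕ → Bool) (m : ℕ) : Prop :=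
  P m (pipeCol n P (m + 1)) = false → m + pipeCol n P (m + 1) < n →
    P m (pipeCol n P (m + 1) + 1) = false

def PipeExitsAt (n : ℕ) (P : ℕ → ℕ → Bool) (m d : ℕ) : Prop :=
  ∀ j, 1 ≤ j → m + j ≤ n + 1 → (northLabel n P m j = n ↔ j = d)

def CrossesPipeBelow (n : ℕ) (P : ℕ → ℕ → Bool) (m p : ℕ) : Prop :=
  ∃ r c, m ≤ r ∧ CrossAt n P r c p n

theorem CrossesPipeBelow.of_succ {p : ℕ} (h : CrossesPipeBelow n P (m + 1) p) :
    CrossesPipeBelow n P m p := by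
  obtain ⟨r, c, hr, hc⟩ := h
  exact ⟨r, c, by omega, hc⟩

theorem westLabel_eq_iff (hm : m < n) (hT : PipeTurnsNorth n P m)
    (hE : PipeExitsAt n P (m + 1) (pipeCol n P (m + 1))) (hj : 1 ≤ j) (hjn : m + j ≤ n + 1) :
    westLabel n P m j = n ↔ P m (pipeCol n P (m + 1)) = false ∧ j = pipeCol n P (m + 1) + 1 := by
  rw [PipeTurnsNorth] at hT
  set c := pipeCol n P (m + 1)
  have hc : 1 ≤ c := one_le_pipeCol
  induction j, hj using Nat.le_induction with
  | base => rw [westLabel_one]; exact iff_of_false (by omega) (fun h => absurd h.2 (by omega))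
  | succ j hj ih =>
    rw [westLabel_succ hj]
    by_cases hb : P m j = false
    · rw [if_pos ⟨by omega, hb⟩, southLabel_eq_northLabel, hE j hj (by omega)]
      constructor
      · rintro rfl; exact ⟨hb, rfl⟩
      · rintro ⟨-, h⟩; omega
    · rw [if_neg (fun h => hb h.2), show westLabel n P m j = n ↔ _ from ih (by omega)]
      rw [Bool.not_eq_false] at hb
      constructor
      · rintro ⟨hbc, rfl⟩; simp [hT hbc (by omega)] at hb
      · rintro ⟨hbc, hjc⟩; obtain rfl : j = c := by omega
        simp [hb] at hbc

theorem pipeExitsAt_pipeCol (hT : ∀ r, m ≤ r → PipeTurnsNorth n P r) :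
    PipeExitsAt n P m (pipeCol n P m) := by
  induction m using pipeCol.induct n P with
  | case1 m h =>
    intro j hj hjn
    obtain rfl : j = 1 := by omega
    rw [pipeCol_of_le h, northLabel_eq, if_neg (by omega), westLabel_one]
    simp only [iff_true]
    omega
  | case2 m h hc ih =>
    have hE := ih (fun r hr => hT r (by omega))
    intro j hj hjn
    rw [pipeCol_of_cross (by omega) hc, northLabel_eq]
    split_ifs with hx
    · exact hE j hj (by omega)
    · rw [westLabel_eq_iff (by omega) (hT m le_rfl) hE hj hjn]
      constructor
      · rintro ⟨hb, -⟩; simp [hc] at hb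
      · rintro rfl
        have := add_pipeCol_le (n := n) (P := P) (m := m + 1) (by omega)
        exact absurd ⟨by omega, hc⟩ hx
  | case3 m h hc ih =>
    have hE := ih (fun r hr => hT r (by omega))
    rw [Bool.not_eq_true] at hc
    intro j hj hjn
    rw [pipeCol_of_bump (by omega) hc, northLabel_eq]
    split_ifs with hx
    · rw [southLabel_eq_northLabel, hE j hj (by omega)]
      constructor
      · rintro rfl; simp [hc] at hx
      · rintro rfl; simp [hT m le_rfl hc (by omega)] at hx
    · rw [westLabel_eq_iff (by omega) (hT m le_rfl) hE hj hjn]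
      exact and_iff_right hc

theorem northLabel_pipeCol (hT : ∀ r, m ≤ r → PipeTurnsNorth n P r) (hm : m ≤ n) :
    northLabel n P m (pipeCol n P m) = n :=
  (pipeExitsAt_pipeCol hT _ one_le_pipeCol (add_pipeCol_le hm)).2 rfl

theorem crossesPipeBelow_westLabel (h1 : 1 ≤ m) (hm : m < n) (hT : PipeTurnsNorth n P m)
    (hN : northLabel n P (m + 1) (pipeCol n P (m + 1)) = n)
    (hX : ∀ j, pipeCol n P (m + 1) < j → m + 1 + j ≤ n + 1 →
      CrossesPipeBelow n P (m + 1) (northLabel n P (m + 1) j))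
    (hj : pipeCol n P m < j) (hjn : m + j ≤ n + 1) :
    CrossesPipeBelow n P m (westLabel n P m j) := by
  have hc : 1 ≤ pipeCol n P (m + 1) := one_le_pipeCol
  induction j, hj using Nat.le_induction with
  | base =>
    rcases Bool.eq_false_or_eq_true (P m (pipeCol n P (m + 1))) with hb | hb
    · rw [pipeCol_of_cross hm hb] at hjn ⊢
      rw [westLabel_succ hc, if_neg (by simp [hb])]
      exact ⟨m, _, le_rfl, h1, hc, by omega, hb, Or.inl ⟨rfl, hN⟩⟩
    · rw [pipeCol_of_bump hm hb] at hjn ⊢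
      rw [westLabel_succ (by omega), if_pos ⟨by omega, hT hb (by omega)⟩]
      exact (hX _ (by omega) (by omega)).of_succ
  | succ j hj ih =>
    rw [westLabel_succ (by omega)]
    split_ifs
    · exact (hX j (by rcases pipeCol_cases (P := P) hm with h | h <;> omega) (by omega)).of_succ
    · exact ih (by omega)

theorem crossesPipeBelow_northLabel (hT : ∀ r, m ≤ r → PipeTurnsNorth n P r) (h1 : 1 ≤ m)
    (hj : pipeCol n P m < j) (hjn : m + j ≤ n + 1) :
    CrossesPipeBelow n P m (northLabel n P m j) := by
  induction m using pipeCol.induct n P generalizing j with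
  | case1 m h => rw [pipeCol_of_le h] at hj; omega
  | case2 m h _ ih | case3 m h _ ih =>
    have hT' : ∀ r, m + 1 ≤ r → PipeTurnsNorth n P r := fun r hr => hT r (by omega)
    have hcd := pipeCol_cases (P := P) (show m < n by omega)
    rw [northLabel_eq]
    split_ifs
    · exact (ih hT' (by omega) (by omega) (by omega)).of_succ
    · refine crossesPipeBelow_westLabel h1 (by omega) (hT m le_rfl) ?_ ?_ hj hjn
      · exact northLabel_pipeCol hT' (by omega)
      · exact fun j hj hjn => ih hT' (by omega) hj hjn

theorem pipeTurnsNorth_of_reduced (hR : Reduced n P) (h1 : 1 ≤ m)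
    (hT : ∀ r, m < r → PipeTurnsNorth n P r) : PipeTurnsNorth n P m := by
  have hT' : ∀ r, m + 1 ≤ r → PipeTurnsNorth n P r := hT
  intro hb hmc
  by_contra hx
  rw [Bool.not_eq_false] at hx
  set c := pipeCol n P (m + 1)
  have hN : northLabel n P (m + 1) c = n := northLabel_pipeCol hT' (by omega)
  have hcross : CrossAt n P m (c + 1) (northLabel n P (m + 1) (c + 1)) n := by
    refine ⟨h1, by omega, by omega, hx, Or.inr ⟨?_, rfl⟩⟩
    rw [westLabel_succ one_le_pipeCol, if_pos ⟨by omega, hb⟩, southLabel_eq_northLabel, hN]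
  obtain ⟨r, c', hr, hcross'⟩ :=
    crossesPipeBelow_northLabel hT' (by omega) (j := c + 1) (by omega) (by omega)
  have := (hR _ _ _ _ _ _ hcross hcross').1
  omega

theorem Reduced.pipeTurnsNorth (hR : Reduced n P) (h1 : 1 ≤ m) : PipeTurnsNorth n P m := by
  induction hk : n - m using Nat.strong_induction_on generalizing m with
  | _ k ih =>
    rcases le_or_gt n m with hnm | hmn
    · intro _ h; omega
    · exact pipeTurnsNorth_of_reduced hR h1 fun r hr => ih (n - r) (by omega) (by omega) rfl

theorem delCol_eq_pipeCol (hT : ∀ r, m ≤ r → PipeTurnsNorth n P r) (hm : m ≤ n) :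
    delCol n P m = pipeCol n P m := by
  have hd := add_pipeCol_le (P := P) hm
  have hE := pipeExitsAt_pipeCol (P := P) (m := m + 1) fun r hr => hT r (by omega)
  rw [delCol, Nat.findGreatest_eq_iff]
  refine ⟨by omega, fun _ => ⟨one_le_pipeCol, hd, ?_⟩, fun j hj hjn ⟨hj1, hjm, hpipe⟩ => ?_⟩
  · rcases hm.eq_or_lt with rfl | hm
    · left; rw [pipeCol_of_le le_rfl, westLabel_one]
    · rcases Bool.eq_false_or_eq_true (P m (pipeCol n P (m + 1))) with hb | hb
      · rw [pipeCol_of_cross hm hb] at hd ⊢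
        have := add_pipeCol_le (n := n) (P := P) (m := m + 1) (by omega)
        exact .inr ⟨by omega, northLabel_pipeCol (fun r hr => hT r (by omega)) hm⟩
      · rw [pipeCol_of_bump hm hb] at hd ⊢
        exact .inl ((westLabel_eq_iff hm (hT m le_rfl) hE (by omega) hd).2 ⟨hb, rfl⟩)
  · rcases hm.eq_or_lt with rfl | hm
    · rw [pipeCol_of_le le_rfl] at hj; omega
    · rcases hpipe with hw | ⟨hjn', hs⟩
      · obtain ⟨hb, rfl⟩ := (westLabel_eq_iff hm (hT m le_rfl) hE hj1 hjm).1 hw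
        rw [pipeCol_of_bump hm hb] at hj
        omega
      · have := (hE j hj1 (by omega)).1 hs
        rcases pipeCol_cases (P := P) hm with h | h <;> omega

end Trajectory

/-- `Fin.succAbove` on `ℕ`: the `j`-th column once column `d` is deleted. -/
def skipCol (d j : ℕ) : ℕ := if j < d then j else j + 1

theorem skipCol_injective (d : ℕ) : Function.Injective (skipCol d) := by
  intro a b h
  unfold skipCol at h
  split_ifs at h <;> omega

theorem exists_skipCol_eq {d J : ℕ} (h : J ≠ d) : ∃ j, skipCol d j = J :=
  ⟨if J < d then J else J - 1, by unfold skipCol; split_ifs <;> omega⟩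

section Hat

variable {n : ℕ} {P : ℕ → ℕ → Bool} {i j : ℕ}

theorem hatPD_apply (hT : ∀ m, 1 ≤ m → PipeTurnsNorth n P m) (hi : 1 ≤ i) (hin : i ≤ n) :
    hatPD n P i j = P i (skipCol (pipeCol n P i) j) := by
  rw [hatPD, delCol_eq_pipeCol (fun r hr => hT r (by omega)) hin, skipCol]
  split <;> rfl

theorem skipCol_pipeCol_succ (hi : i < n)
    (h : P i (pipeCol n P (i + 1)) = false → j ≠ pipeCol n P (i + 1)) :
    skipCol (pipeCol n P (i + 1)) j = skipCol (pipeCol n P i) j := by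
  rcases Bool.eq_false_or_eq_true (P i (pipeCol n P (i + 1))) with hb | hb
  · rw [pipeCol_of_cross hi hb]
  · have := h hb
    rw [pipeCol_of_bump hi hb, skipCol, skipCol]
    split_ifs <;> omega

theorem skipCol_pipeCol_succ_of_cross (hi : i < n)
    (hc : P i (skipCol (pipeCol n P i) j) = true) :
    skipCol (pipeCol n P (i + 1)) j = skipCol (pipeCol n P i) j := by
  refine skipCol_pipeCol_succ hi fun hb hj => ?_
  rw [pipeCol_of_bump hi hb, hj, skipCol, if_pos (by omega), hb] at hc
  exact Bool.false_ne_true hc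

theorem one_le_and_add_le_pred_of_cross (hi : i < n) (hJ : 1 ≤ skipCol (pipeCol n P i) j)
    (h : i + skipCol (pipeCol n P i) j ≤ n) (hc : P i (skipCol (pipeCol n P i) j) = true) :
    1 ≤ j ∧ i + j ≤ n - 1 := by
  have := add_pipeCol_le (n := n) (P := P) (m := i + 1) (by omega)
  have := one_le_pipeCol (n := n) (P := P) (m := i + 1)
  rcases Bool.eq_false_or_eq_true (P i (pipeCol n P (i + 1))) with hb | hb
  · rw [pipeCol_of_cross hi hb, skipCol] at hJ h
    split_ifs at hJ h <;> omega
  · rw [pipeCol_of_bump hi hb, skipCol] at hJ h hc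
    split_ifs at hJ h hc with hj
    · refine ⟨by omega, ?_⟩
      by_contra
      obtain rfl : j = pipeCol n P (i + 1) := by omega
      simp [hb] at hc
    · omega

theorem westLabel_skipCol (hi : i < n) :
    westLabel n P i (skipCol (pipeCol n P (i + 1)) j + 1) =
      westLabel n P i (skipCol (pipeCol n P i) (j + 1)) := by
  rcases Bool.eq_false_or_eq_true (P i (pipeCol n P (i + 1))) with hb | hb
  · rw [pipeCol_of_cross hi hb]
    by_cases hj : j + 1 = pipeCol n P (i + 1)
    · rw [skipCol, skipCol, if_pos (by omega), if_neg (by omega), hj,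
        westLabel_succ one_le_pipeCol, if_neg (by simp [hb])]
    · congr 1
      unfold skipCol
      split_ifs <;> omega
  · rw [pipeCol_of_bump hi hb]
    congr 1
    unfold skipCol
    split_ifs <;> omega

theorem westLabel_hatPD_succ (hT : ∀ m, 1 ≤ m → PipeTurnsNorth n P m) (hi : 1 ≤ i) (hin : i < n)
    (hN : ∀ j, 1 ≤ j → i + 1 + j ≤ n → northLabel (n - 1) (hatPD n P) (i + 1) j =
      northLabel n P (i + 1) (skipCol (pipeCol n P (i + 1)) j))
    (hij : i + (j + 1) ≤ n) :
    westLabel (n - 1) (hatPD n P) i (j + 1) =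
      westLabel n P i (skipCol (pipeCol n P i) (j + 1)) := by
  rw [← westLabel_skipCol hin]
  induction j with
  | zero =>
    rw [westLabel_one, skipCol, if_pos (show 0 < pipeCol n P (i + 1) from one_le_pipeCol),
      zero_add, westLabel_one]
  | succ k ih =>
    have hW : westLabel (n - 1) (hatPD n P) i (k + 1) =
        westLabel n P i (skipCol (pipeCol n P i) (k + 1)) :=
      (ih (by omega)).trans (westLabel_skipCol hin)
    rw [westLabel_succ (by omega), hatPD_apply hT hi hin.le, southLabel_eq_northLabel,
      hN _ (by omega) (by omega)]
    by_cases hpiv : P i (pipeCol n P (i + 1)) = false ∧ k + 1 = pipeCol n P (i + 1)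
    · obtain ⟨hb, hk⟩ := hpiv
      have h1 : skipCol (pipeCol n P i) (k + 1) = k + 1 := by
        rw [pipeCol_of_bump hin hb, skipCol, if_pos (by omega)]
      have h2 : skipCol (pipeCol n P (i + 1)) (k + 1) = k + 2 := by
        rw [skipCol, if_neg (by omega)]
      have hb1 : P i (k + 1) = false := hk ▸ hb
      have hb2 : P i (k + 2) = false := by
        have := hT i hi hb (by omega)
        rwa [← hk] at this
      rw [h1, h2, if_pos ⟨by omega, hb1⟩, westLabel_succ (by omega), if_pos ⟨by omega, hb2⟩,
        southLabel_eq_northLabel]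
    · rw [skipCol_pipeCol_succ hin fun hb hk => hpiv ⟨hb, hk⟩, hW,
        westLabel_succ (by unfold skipCol; split <;> omega), southLabel_eq_northLabel]
      have : i + skipCol (pipeCol n P i) (k + 1) ≤ n := by unfold skipCol; split <;> omega
      by_cases hb : P i (skipCol (pipeCol n P i) (k + 1)) = false
      · rw [if_pos ⟨by omega, hb⟩, if_pos ⟨this, hb⟩]
      · rw [if_neg fun h => hb h.2, if_neg fun h => hb h.2]

theorem northLabel_hatPD (hT : ∀ m, 1 ≤ m → PipeTurnsNorth n P m) (hi : 1 ≤ i) (hj : 1 ≤ j)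
    (hij : i + j ≤ n) :
    northLabel (n - 1) (hatPD n P) i j = northLabel n P i (skipCol (pipeCol n P i) j) := by
  induction i using pipeCol.induct n P generalizing j with
  | case1 i h => omega
  | case2 i h _ ih | case3 i h _ ih =>
    have hin : i < n := by omega
    have hN := fun j (hj : 1 ≤ j) (hij : i + 1 + j ≤ n) => ih (by omega) hj hij
    rw [northLabel_eq, northLabel_eq, hatPD_apply hT hi hin.le]
    by_cases hx : i + j ≤ n - 1 ∧ P i (skipCol (pipeCol n P i) j) = true
    · rw [if_pos hx, if_pos ⟨by unfold skipCol; split <;> omega, hx.2⟩, southLabel_eq_northLabel,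
        southLabel_eq_northLabel, hN j hj (by omega), skipCol_pipeCol_succ_of_cross hin hx.2]
    · obtain ⟨k, rfl⟩ : ∃ k, j = k + 1 := ⟨j - 1, by omega⟩
      have hJ : 1 ≤ skipCol (pipeCol n P i) (k + 1) := by unfold skipCol; split <;> omega
      rw [if_neg hx, if_neg fun h => hx ⟨(one_le_and_add_le_pred_of_cross hin hJ h.1 h.2).2, h.2⟩,
        westLabel_hatPD_succ hT hi hin hN hij]

theorem crossAt_hatPD_iff (hT : ∀ m, 1 ≤ m → PipeTurnsNorth n P m) {p q : ℕ} :
    CrossAt (n - 1) (hatPD n P) i j p q ↔ CrossAt n P i (skipCol (pipeCol n P i) j) p q := by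
  have hlabels (hi : 1 ≤ i) (hj : 1 ≤ j) (hij : i + j ≤ n - 1)
      (hc : P i (skipCol (pipeCol n P i) j) = true) :
      westLabel (n - 1) (hatPD n P) i j = westLabel n P i (skipCol (pipeCol n P i) j) ∧
        southLabel (n - 1) (hatPD n P) i j = southLabel n P i (skipCol (pipeCol n P i) j) := by
    obtain ⟨k, rfl⟩ : ∃ k, j = k + 1 := ⟨j - 1, by omega⟩
    refine ⟨westLabel_hatPD_succ hT hi (by omega)
      (fun j hj hij => northLabel_hatPD hT (by omega) hj hij) (by omega), ?_⟩
    rw [southLabel_eq_northLabel, southLabel_eq_northLabel,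
      northLabel_hatPD hT (by omega) (by omega) (by omega),
      skipCol_pipeCol_succ_of_cross (by omega) hc]
  constructor
  · rintro ⟨hi, hj, hij, hc, hlab⟩
    rw [hatPD_apply hT hi (by omega)] at hc
    obtain ⟨hW, hS⟩ := hlabels hi hj hij hc
    refine ⟨hi, by unfold skipCol; split <;> omega, by unfold skipCol; split <;> omega, hc, ?_⟩
    rwa [hW, hS] at hlab
  · rintro ⟨hi, hJ, hiJ, hc, hlab⟩
    have hin : i < n := by omega
    obtain ⟨hj, hij⟩ := one_le_and_add_le_pred_of_cross hin hJ hiJ hc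
    obtain ⟨hW, hS⟩ := hlabels hi hj hij hc
    refine ⟨hi, hj, hij, by rwa [hatPD_apply hT hi hin.le], ?_⟩
    rwa [hW, hS]

theorem crossAt_pipeCol (hT : ∀ m, 1 ≤ m → PipeTurnsNorth n P m) {p q : ℕ}
    (h : CrossAt n P i (pipeCol n P i) p q) : p = n ∨ q = n := by
  obtain ⟨hi, -, hid, hc, hlab⟩ := h
  have hin : i < n := by have := one_le_pipeCol (n := n) (P := P) (m := i); omega
  rcases Bool.eq_false_or_eq_true (P i (pipeCol n P (i + 1))) with hb | hb
  · rw [pipeCol_of_cross hin hb, southLabel_eq_northLabel,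
      northLabel_pipeCol (fun r hr => hT r (by omega)) hin] at hlab
    rcases hlab with ⟨-, rfl⟩ | ⟨-, rfl⟩
    · exact .inr rfl
    · exact .inl rfl
  · rw [pipeCol_of_bump hin hb] at hid hc
    simp [hT i hi hb (by omega)] at hc

theorem reduced_hatPD (hR : Reduced n P) : Reduced (n - 1) (hatPD n P) := by
  have hT : ∀ m, 1 ≤ m → PipeTurnsNorth n P m := fun _ hm => hR.pipeTurnsNorth hm
  intro p q i j i' j' h h'
  obtain ⟨rfl, hjj⟩ := hR p q _ _ _ _ ((crossAt_hatPD_iff hT).1 h) ((crossAt_hatPD_iff hT).1 h')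
  exact ⟨rfl, skipCol_injective _ hjj⟩

theorem theta_eq_of_crossAt (hR : Reduced n P) {r c p q : ℕ} (h : CrossAt n P r c p q) :
    theta n P p q = r := by
  have hex : ∃ rc : ℕ × ℕ, CrossAt n P rc.1 rc.2 p q := ⟨(r, c), h⟩
  rw [theta, dif_pos hex]
  exact (hR p q _ _ _ _ (Classical.choose_spec hex) h).1

theorem theta_hatPD (hR : Reduced n P) {p q : ℕ} (hp : p ≠ n) (hq : q ≠ n) :
    theta (n - 1) (hatPD n P) p q = theta n P p q := by
  have hT : ∀ m, 1 ≤ m → PipeTurnsNorth n P m := fun _ hm => hR.pipeTurnsNorth hm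
  by_cases h : ∃ rc : ℕ × ℕ, CrossAt n P rc.1 rc.2 p q
  · obtain ⟨⟨r, J⟩, hc⟩ := h
    have hJ : J ≠ pipeCol n P r := by
      rintro rfl
      rcases crossAt_pipeCol hT hc with rfl | rfl <;> contradiction
    obtain ⟨j, rfl⟩ := exists_skipCol_eq hJ
    rw [theta_eq_of_crossAt hR hc,
      theta_eq_of_crossAt (reduced_hatPD hR) ((crossAt_hatPD_iff hT).2 hc)]
  · rw [theta, theta, dif_neg h, dif_neg]
    rintro ⟨⟨r, j⟩, hc⟩
    exact h ⟨(r, skipCol (pipeCol n P r) j), (crossAt_hatPD_iff hT).1 hc⟩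

theorem hatPD_eq_true (hT : ∀ m, 1 ≤ m → PipeTurnsNorth n P m)
    (hP : ∀ i j, P i j = true → 1 ≤ i ∧ 1 ≤ j ∧ i + j ≤ n) (h : hatPD n P i j = true) :
    1 ≤ i ∧ 1 ≤ j ∧ i + j ≤ n - 1 := by
  have hi : 1 ≤ i ∧ i < n := by
    rw [hatPD] at h
    split_ifs at h <;> (have := hP _ _ h; omega)
  rw [hatPD_apply hT hi.1 hi.2.le] at h
  obtain ⟨-, hJ, hiJ⟩ := hP _ _ h
  exact ⟨hi.1, one_le_and_add_le_pred_of_cross hi.2 hJ hiJ h⟩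

end Hat

theorem val_succAbove {m : ℕ} (p : Fin (m + 1)) (k : Fin m) :
    (p.succAbove k : ℕ) = skipCol p k := by
  unfold Fin.succAbove skipCol
  split_ifs <;> simp_all [Fin.lt_def]

theorem finRange_eraseIdx {m : ℕ} (p : Fin (m + 1)) :
    (List.finRange (m + 1)).eraseIdx p = (List.finRange m).map p.succAbove := by
  apply List.ext_getElem
  · simp [List.length_eraseIdx, p.isLt]
  · intro k h1 h2
    simp only [List.getElem_eraseIdx, List.getElem_map, List.getElem_finRange]
    ext
    rw [val_succAbove, skipCol]
    split_ifs <;> simp_all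

theorem exists_perm_erase_last {m : ℕ} (w : Equiv.Perm (Fin (m + 1))) (p : Fin (m + 1))
    (hp : w p = Fin.last m) :
    ∃ w' : Equiv.Perm (Fin m), (∀ k, (w' k : ℕ) = w (p.succAbove k)) ∧
      (List.finRange m).map (fun a => (w' a : ℕ) + 1) =
        ((List.finRange (m + 1)).map fun a => (w a : ℕ) + 1).erase (m + 1) := by
  let w' : Equiv.Perm (Fin m) := (finSuccAboveEquiv p).trans <|
    (w.subtypeEquiv fun x => by rw [← hp, w.injective.ne_iff]).trans
      (finSuccAboveEquiv (Fin.last m)).symm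
  have hw' (k : Fin m) : (w' k : ℕ) = w (p.succAbove k) := by
    simp [w', finSuccAboveEquiv_symm_apply_last, finSuccAboveEquiv_apply]
  refine ⟨w', hw', ?_⟩
  have hnodup : ((List.finRange (m + 1)).map fun a => (w a : ℕ) + 1).Nodup :=
    (List.nodup_finRange _).map fun a b h => w.injective (Fin.ext (by omega))
  rw [List.erase_eq_eraseIdx_of_idxOf (i := p) ?_, List.eraseIdx_map, finRange_eraseIdx,
    List.map_map]
  · simp [Function.comp_def, hw']
  · convert hnodup.idxOf_getElem p (by simp; omega)
    simp [hp]

/-- `P̂` is a reduced pipe dream for the permutation `ŵ ∈ S_{n-1}`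
obtained from `w` by deleting the value `n` from its one-line notation, and its
inversions tableau `Θ(P̂)` is `Θ(P)` with column `n` deleted. -/
theorem hat_pipe_dream {n : ℕ} (hn : 1 ≤ n) (w : Equiv.Perm (Fin n)) (P : RPD w) :
    ∃ what : Equiv.Perm (Fin (n - 1)),
      ((List.finRange (n - 1)).map fun a => (what a : ℕ) + 1)
          = (((List.finRange n).map fun a => (w a : ℕ) + 1).erase n) ∧
      IsPD what (hatPD n P.1) ∧ Reduced (n - 1) (hatPD n P.1) ∧
      ∀ i j, 1 ≤ i → i < j → j ≤ n - 1 →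
        theta (n - 1) (hatPD n P.1) i j = theta n P.1 i j := by
  obtain ⟨⟨hP, hPw⟩, hR⟩ := P.2
  have hT : ∀ m, 1 ≤ m → PipeTurnsNorth n P.1 m := fun _ hm => hR.pipeTurnsNorth hm
  obtain ⟨m, rfl⟩ : ∃ m, n = m + 1 := ⟨n - 1, by omega⟩
  set d := pipeCol (m + 1) P.1 1
  have hd : 1 ≤ d ∧ d ≤ m + 1 :=
    ⟨one_le_pipeCol, by have := add_pipeCol_le (n := m + 1) (P := P.1) (m := 1) (by omega); omega⟩
  have hwd : w ⟨d - 1, by omega⟩ = Fin.last m := by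
    have := hPw d hd.1 hd.2
    rw [northLabel_pipeCol hT (by omega), permVal, dif_pos hd] at this
    ext
    simp only [Fin.val_last]
    omega
  obtain ⟨w', hw', hlist⟩ := exists_perm_erase_last w _ hwd
  refine ⟨w', hlist, ⟨fun i j h => hatPD_eq_true hT hP h, fun j hj hjm => ?_⟩, reduced_hatPD hR,
    fun i j _ hij hj => theta_hatPD hR (by omega) (by omega)⟩
  have hJ : 1 ≤ skipCol d j ∧ skipCol d j ≤ m + 1 := by unfold skipCol; split <;> omega
  rw [northLabel_hatPD hT le_rfl hj (by omega), hPw _ hJ.1 hJ.2, permVal, permVal, dif_pos hJ,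
    dif_pos ⟨hj, hjm⟩, hw']
  congr 3
  ext
  rw [val_succAbove]
  show skipCol d j - 1 = skipCol (d - 1) (j - 1)
  unfold skipCol
  split_ifs <;> omega
end
end

section
/- Let w ∈ S_n and let T, T' be inversions tableaux for w with T' = ↑_M T where M is a multiset supported on exactly one box (x₀,n) with multiplicity m ≥ 1. Then ↑_{(x₀,n)} T (incrementing the box once) is again an inversions tableau for w. -/
open Classical

noncomputable section

/-! Let `T₁` be the first of the `m` increments. The later ones only raise the box `(x₀,n)`
and never touch an entry outside column `n`, below `(x₀,n)`, or not exceeding the current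
value of `(x₀,n)`. If `T₁` were a trade with `(i'',n)`, then `T x₀ i'' ≤ T x₀ n` by balance
of `Λ(x₀,i'',n)` in `T`, and the same Λ-shape would be unbalanced in `T'`. So `T₁` is a pure
increment to a value `b` absent from column `n`, which makes it the only increment of `T`
at `(x₀,n)`. Only the Λ-shapes `Λ(x₀,j,n)` and `Λ(i,x₀,n)` see the new entry, and their
balance in `T₁` follows from their balance in `T` and in `T'`. -/

def setBox (T : ℕ → ℕ → ℕ) (i j b : ℕ) : ℕ → ℕ → ℕ :=
  fun r c => if r = i ∧ c = j then b else T r c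

section setBox

variable {T : ℕ → ℕ → ℕ} {i j b r c : ℕ}

@[simp]
theorem setBox_apply_self : setBox T i j b i j = b := by
  simp [setBox]

theorem setBox_apply_of_row_ne (h : r ≠ i) : setBox T i j b r c = T r c := by
  simp [setBox, h]

theorem setBox_apply_of_col_ne (h : c ≠ j) : setBox T i j b r c = T r c := by
  simp [setBox, h]

theorem setBox_le_row (hT : ∀ r c, T r c ≤ r) (hb : b ≤ i) (r c : ℕ) :
    setBox T i j b r c ≤ r := by
  unfold setBox
  split_ifs with h
  · exact h.1 ▸ hb
  · exact hT r c

end setBox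

structure LiftsBox (S S' : ℕ → ℕ → ℕ) (i j : ℕ) : Prop where
  box_le : S i j ≤ S' i j
  eq_of_col_ne : ∀ r c, c ≠ j → S' r c = S r c
  eq_of_lt : ∀ r, r < i → S' r j = S r j
  eq_of_le_box : ∀ r, r ≠ i → S r j ≤ S i j → S' r j = S r j

namespace LiftsBox

variable {S S₁ S₂ : ℕ → ℕ → ℕ} {i j : ℕ}

theorem refl (S : ℕ → ℕ → ℕ) (i j : ℕ) : LiftsBox S S i j :=
  ⟨le_rfl, fun _ _ _ => rfl, fun _ _ => rfl, fun _ _ _ => rfl⟩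

theorem trans (h₁ : LiftsBox S S₁ i j) (h₂ : LiftsBox S₁ S₂ i j) : LiftsBox S S₂ i j where
  box_le := h₁.box_le.trans h₂.box_le
  eq_of_col_ne r c hc := (h₂.eq_of_col_ne r c hc).trans (h₁.eq_of_col_ne r c hc)
  eq_of_lt r hr := (h₂.eq_of_lt r hr).trans (h₁.eq_of_lt r hr)
  eq_of_le_box r hr hle := by
    have h₁r := h₁.eq_of_le_box r hr hle
    rw [h₂.eq_of_le_box r hr (h₁r ▸ hle.trans h₁.box_le), h₁r]

end LiftsBox

namespace IncrementAt

variable {T T' T₁ : ℕ → ℕ → ℕ} {i j : ℕ}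

theorem liftsBox (h : IncrementAt T T' i j) : LiftsBox T T' i j := by
  obtain ⟨b, hab, -, -, ⟨-, rfl⟩ | ⟨i'', hi'', hb, rfl⟩⟩ := h
  · exact
      { box_le := by simpa [setBox] using hab.le
        eq_of_col_ne := fun r c hc => setBox_apply_of_col_ne hc
        eq_of_lt := fun r hr => setBox_apply_of_row_ne hr.ne
        eq_of_le_box := fun r hr _ => setBox_apply_of_row_ne hr }
  · change LiftsBox T (setBox (setBox T i'' j (T i j)) i j b) i j
    exact
      { box_le := by simpa using hab.le
        eq_of_col_ne := fun r c hc => by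
          rw [setBox_apply_of_col_ne hc, setBox_apply_of_col_ne hc]
        eq_of_lt := fun r hr => by
          rw [setBox_apply_of_row_ne hr.ne, setBox_apply_of_row_ne (by omega)]
        eq_of_le_box := fun r hr hle => by
          have : r ≠ i'' := by rintro rfl; omega
          rw [setBox_apply_of_row_ne hr, setBox_apply_of_row_ne this] }

theorem isLeast (h : IncrementAt T T' i j) :
    IsLeast {b | T i j < b ∧ ∀ r, 1 ≤ r → r < i → T r j ≠ b} (T' i j) := by
  obtain ⟨b, hab, hfill, hnb, hcase⟩ := h
  have hb : T' i j = b := by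
    rcases hcase with ⟨-, rfl⟩ | ⟨i'', -, -, rfl⟩ <;> simp
  refine hb ▸ ⟨⟨hab, hnb⟩, fun k ⟨hk, hk'⟩ => not_lt.mp fun hlt => ?_⟩
  obtain ⟨r, hr1, hri, hr⟩ := hfill k hk hlt
  exact hk' r hr1 hri hr

theorem eq_setBox_of_forall_ne (h : IncrementAt T T' i j)
    (hfresh : ∀ r, 1 ≤ r → T r j ≠ T' i j) : T' = setBox T i j (T' i j) := by
  obtain ⟨b, -, -, -, ⟨-, rfl⟩ | ⟨i'', hi'', hb, rfl⟩⟩ := h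
  · change setBox T i j b = setBox T i j (setBox T i j b i j)
    rw [setBox_apply_self]
  · exact absurd hb (by simpa using hfresh i'' (by omega))

theorem forall_ne_of_liftsBox {n : ℕ} {w : Equiv.Perm (Fin n)} (hT : ColInj w T)
    (hTbal : BalancedTab n T) (hT'bal : BalancedTab n T') (hi : 1 ≤ i)
    (h : IncrementAt T T₁ i n) (hL : LiftsBox T₁ T' i n) :
    ∀ r, 1 ≤ r → T r n ≠ T₁ i n := by
  obtain ⟨b, hab, -, -, ⟨hnone, rfl⟩ | ⟨i'', hi'', hb, rfl⟩⟩ := h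
  · simpa using hnone
  intro r _ _
  change LiftsBox (setBox (setBox T i'' n (T i n)) i n b) T' i n at hL
  have hi''n : i'' < n := ((hT.1 i'' n).mp (by omega)).2.1
  have h₁i'' : setBox (setBox T i'' n (T i n)) i n b i'' n = T i n := by
    rw [setBox_apply_of_row_ne (by omega), setBox_apply_self]
  have h'box : b ≤ T' i n := by simpa using hL.box_le
  have h'row : T' i i'' = T i i'' := by
    rw [hL.eq_of_col_ne i i'' hi''n.ne, setBox_apply_of_col_ne hi''n.ne,
      setBox_apply_of_col_ne hi''n.ne]
  have h'col : T' i'' n = T i n := by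
    rw [hL.eq_of_le_box i'' (by omega) (by simpa [h₁i''] using hab.le), h₁i'']
  have hΛ := hTbal i i'' n hi hi'' hi''n le_rfl
  have hΛ' := hT'bal i i'' n hi hi'' hi''n le_rfl
  simp only [LBal, h'row, h'col, hb, min_le_iff, le_max_iff] at hΛ hΛ'
  omega

end IncrementAt

namespace IncBy

theorem liftsBox {M : Multiset (ℕ × ℕ)} {S S' : ℕ → ℕ → ℕ} {i j : ℕ} (h : IncBy M S S')
    (hM : ∀ p ∈ M, p = (i, j)) : LiftsBox S S' i j := by
  induction h with
  | nil T => exact LiftsBox.refl T i j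
  | cons h₁ _ ih =>
    obtain ⟨rfl, rfl⟩ := Prod.ext_iff.mp (hM _ (Multiset.mem_cons_self _ _))
    exact h₁.liftsBox.trans (ih fun p hp => hM p (Multiset.mem_cons_of_mem hp))

theorem exists_of_replicate_succ {m i j : ℕ} {T T' : ℕ → ℕ → ℕ}
    (h : IncBy (Multiset.replicate (m + 1) (i, j)) T T') :
    ∃ T₁, IncrementAt T T₁ i j ∧ IncBy (Multiset.replicate m (i, j)) T₁ T' := by
  generalize hN : Multiset.replicate (m + 1) (i, j) = N at h
  cases h with
  | nil => simp at hN
  | @cons M _ T₁ _ i' j' h₁ h₂ =>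
    have hp : (i', j') = (i, j) :=
      Multiset.eq_of_mem_replicate (n := m + 1) (hN ▸ Multiset.mem_cons_self (i', j') M)
    obtain ⟨rfl, rfl⟩ := Prod.ext_iff.mp hp
    rw [Multiset.replicate_succ] at hN
    exact ⟨T₁, h₁, (Multiset.cons_inj_right _).mp hN ▸ h₂⟩

end IncBy

theorem colInj_setBox {n : ℕ} {w : Equiv.Perm (Fin n)} {T : ℕ → ℕ → ℕ} {i j b : ℕ}
    (hT : ColInj w T) (hij : IsInv w i j) (hb : b ≠ 0) (hfresh : ∀ r, 1 ≤ r → T r j ≠ b) :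
    ColInj w (setBox T i j b) := by
  refine ⟨fun r c => ?_, fun r r' c hr hrr' hr'c => ?_⟩
  · by_cases h : r = i ∧ c = j
    · obtain ⟨rfl, rfl⟩ := h
      simpa [hb] using hij
    · simpa [setBox, h] using hT.1 r c
  · by_cases hc : c = j
    · subst hc
      by_cases hri : r = i
      · subst hri
        simpa [setBox_apply_of_row_ne hrr'.ne'] using fun _ _ h => hfresh r' (by omega) h.symm
      · by_cases hr'i : r' = i
        · subst hr'i
          simpa [setBox_apply_of_row_ne hri] using fun _ _ => hfresh r hr
        · simpa [setBox_apply_of_row_ne hri, setBox_apply_of_row_ne hr'i] using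
            hT.2 r r' c hr hrr' hr'c
    · simpa [setBox_apply_of_col_ne hc] using hT.2 r r' c hr hrr' hr'c

section Balance

variable {n x b : ℕ} {T T' : ℕ → ℕ → ℕ}

theorem lBal_setBox_of_apex (hT : LBal T x j n) (hT' : LBal T' x j n) (hxj : x < j)
    (hjn : j < n) (hb : T x n ≤ b) (hL : LiftsBox (setBox T x n b) T' x n) :
    LBal (setBox T x n b) x j n := by
  have h'box : b ≤ T' x n := by simpa using hL.box_le
  have hxj' : setBox T x n b x j = T x j := setBox_apply_of_col_ne hjn.ne
  have hjn' : setBox T x n b j n = T j n := setBox_apply_of_row_ne hxj.ne'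
  simp only [LBal, hxj', hjn', setBox_apply_self, min_le_iff, le_max_iff] at hT hT' ⊢
  refine ⟨by omega, by_contra fun hlt => ?_⟩
  rw [not_or, not_le, not_le] at hlt
  have h'xj : T' x j = T x j := by rw [hL.eq_of_col_ne x j hjn.ne, hxj']
  have h'jn : T' j n = T j n := by
    rw [hL.eq_of_le_box j hxj.ne' (by simp [hjn', hlt.2.le]), hjn']
  omega

theorem lBal_setBox_of_leg (hT : LBal T i x n) (hT' : LBal T' i x n) (hix : i < x)
    (hxn : x < n) (hb : T x n ≤ b) (hL : LiftsBox (setBox T x n b) T' x n) :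
    LBal (setBox T x n b) i x n := by
  have h'box : b ≤ T' x n := by simpa using hL.box_le
  have hix' : setBox T x n b i x = T i x := setBox_apply_of_col_ne hxn.ne
  have hin' : setBox T x n b i n = T i n := setBox_apply_of_row_ne hix.ne
  have h'ix : T' i x = T i x := by rw [hL.eq_of_col_ne i x hxn.ne, hix']
  have h'in : T' i n = T i n := by rw [hL.eq_of_lt i hix, hin']
  simp only [LBal, hix', hin', h'ix, h'in, setBox_apply_self, min_le_iff, le_max_iff]
    at hT hT' ⊢
  omega

/-- Only `Λ(x,j,n)` and `Λ(i,x,n)` contain the box `(x,n)` of the last column. -/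
theorem balancedTab_setBox (hT : BalancedTab n T) (hT' : BalancedTab n T') (hb : T x n ≤ b)
    (hL : LiftsBox (setBox T x n b) T' x n) : BalancedTab n (setBox T x n b) := by
  intro i j k hi hij hjk hkn
  have hij' : setBox T x n b i j = T i j := setBox_apply_of_col_ne (by omega)
  by_cases hk : k = n
  · subst hk
    by_cases hix : i = x
    · subst hix
      exact lBal_setBox_of_apex (hT i j k hi hij hjk hkn) (hT' i j k hi hij hjk hkn) hij hjk hb hL
    by_cases hjx : j = x
    · subst hjx
      exact lBal_setBox_of_leg (hT i j k hi hij hjk hkn) (hT' i j k hi hij hjk hkn) hij hjk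
        hb hL
    simpa [LBal, hij', setBox_apply_of_row_ne hix, setBox_apply_of_row_ne hjx] using
      hT i j k hi hij hjk hkn
  · simpa [LBal, hij', setBox_apply_of_col_ne hk] using hT i j k hi hij hjk hkn

end Balance

/-- If `T' = ↑_M T` where `M` is supported on the single box `(x₀,n)`
with multiplicity `m ≥ 1`, then incrementing `(x₀,n)` once yields an
inversions tableau. -/
theorem invTab_of_increment_lastCol {n : ℕ} (w : Equiv.Perm (Fin n))
    (T T' : ℕ → ℕ → ℕ) (hT : InvTab w T) (hT' : InvTab w T')
    (x₀ m : ℕ) (hm : 1 ≤ m)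
    (hM : IncBy (Multiset.replicate m (x₀, n)) T T') :
    ∀ T'', IncrementAt T T'' x₀ n → InvTab w T'' := by
  intro T'' h''
  obtain ⟨m, rfl⟩ : ∃ k, m = k + 1 := ⟨m - 1, by omega⟩
  obtain ⟨T₁, h₁, hrest⟩ := hM.exists_of_replicate_succ
  have hL : LiftsBox T₁ T' x₀ n := hrest.liftsBox fun _ => Multiset.eq_of_mem_replicate
  have hb : T x₀ n < T₁ x₀ n := h₁.isLeast.1.1
  have hinv : IsInv w x₀ n := (hT'.1.1 x₀ n).mp (by have := hL.box_le; omega)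
  have hfresh := h₁.forall_ne_of_liftsBox hT.1 hT.2.1 hT'.2.1 hinv.1 hL
  have hT₁ := h₁.eq_setBox_of_forall_ne hfresh
  have hT'' : T'' = T₁ := by
    have hval : T'' x₀ n = T₁ x₀ n := h''.isLeast.unique h₁.isLeast
    rw [h''.eq_setBox_of_forall_ne (hval ▸ hfresh), hval, ← hT₁]
  have hrow : T₁ x₀ n ≤ x₀ := hL.box_le.trans (hT'.2.2 x₀ n)
  rw [hT'']
  rw [hT₁] at hL ⊢
  exact ⟨colInj_setBox hT.1 hinv (by omega) hfresh,
    balancedTab_setBox hT.2.1 hT'.2.1 hb.le hL, setBox_le_row hT.2.2 hrow⟩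
end
end
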